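/- In the group Spin(3) ⊂ Cl(3)⁰, the elements x_i = (1/√2)(1 + e₂e₃) and x_j = (1/√2)(1 + e₁e₂) satisfy the braid relation x_j x_i x_j = x_i x_j x_i, the relations x_i⁸ = 1 and x_j⁸ = 1, and the relation x_i⁻¹ x_j² x_i = x_j² x_i². -/

import Mathlib

/-! `a = e₂e₃` and `b = e₁e₂` are anticommuting square roots of `-1`, and every relation except
spin membership is an identity in an arbitrary ring for such a pair: `(1 + a)/√2` squares to `a`,
hence has order 8, has inverse `(1 - a)/√2`, and the braid and conjugation relations follow by
expanding and using `bab = a`, `aba = b`. Membership in `Spin(3)` holds because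
`(1 + eᵢeⱼ)/√2 = eᵢ · (eⱼ - eᵢ)/√2` is a product of two unit vectors. -/

/-- The negative definite standard quadratic form `-q₃` on `ℝ³`. -/
noncomputable def Qneg3 : QuadraticForm ℝ (Fin 3 → ℝ) :=
  QuadraticMap.weightedSumSquares ℝ (fun _ : Fin 3 => (-1 : ℝ))

/-- The image of the `i`-th standard basis vector of `ℝ³` in `Cl(3)`. -/
noncomputable def e (i : Fin 3) : CliffordAlgebra Qneg3 :=
  CliffordAlgebra.ι Qneg3 (Pi.single i 1)

/-- `xᵢ = (1/√2)(1 + e₂e₃)`. -/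
noncomputable def xi : CliffordAlgebra Qneg3 :=
  (Real.sqrt 2)⁻¹ • (1 + e 1 * e 2)

/-- `xⱼ = (1/√2)(1 + e₁e₂)`. -/
noncomputable def xj : CliffordAlgebra Qneg3 :=
  (Real.sqrt 2)⁻¹ • (1 + e 0 * e 1)

open CliffordAlgebra

theorem ι_mul_ι_mem_spinGroup {R M : Type*} [CommRing R] [AddCommGroup M] [Module R M]
    {Q : QuadraticForm R M} {u v : M} (h : Q u * Q v = 1) :
    ι Q u * ι Q v ∈ spinGroup Q := by
  have hunit (m : M) (hm : IsUnit (Q m)) : (isUnit_ι_of_isUnit Q hm).unit ∈ lipschitzGroup Q :=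
    Subgroup.subset_closure ⟨m, rfl⟩
  have hstar : star (ι Q u * ι Q v) = ι Q v * ι Q u := by
    simp [star_def]
  refine spinGroup.mem_iff.2 ⟨⟨⟨_, mul_mem (hunit u (.of_mul_eq_one _ h))
    (hunit v (.of_mul_eq_one_right _ h)), rfl⟩, ?_⟩, ((even.ι Q).bilin u v).prop⟩
  rw [SetLike.mem_coe, Unitary.mem_iff, hstar]
  constructor
  · rw [mul_assoc, ← mul_assoc (ι Q u) (ι Q u), ι_sq_scalar, Algebra.left_comm, ι_sq_scalar,
      ← map_mul, h, map_one]
  · rw [mul_assoc, ← mul_assoc (ι Q v) (ι Q v), ι_sq_scalar, Algebra.left_comm, ι_sq_scalar,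
      ← map_mul, mul_comm, h, map_one]

section AnticommutingSquareRoots

variable {A : Type*} [Ring A] {a b : A}

theorem one_add_mul_self_of_mul_self_eq_neg_one (ha : a * a = -1) :
    (1 + a) * (1 + a) = 2 * a := by
  have : (1 + a) * (1 + a) = 1 + a * a + 2 * a := by noncomm_ring
  rw [this, ha, add_neg_cancel, zero_add]

theorem one_sub_mul_one_add_of_mul_self_eq_neg_one (ha : a * a = -1) :
    (1 - a) * (1 + a) = 2 := by
  have : (1 - a) * (1 + a) = 1 - a * a := by noncomm_ring
  rw [this, ha, sub_neg_eq_add, one_add_one_eq_two]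

theorem one_add_mul_one_sub_of_mul_self_eq_neg_one (ha : a * a = -1) :
    (1 + a) * (1 - a) = 2 := by
  have : (1 + a) * (1 - a) = 1 - a * a := by noncomm_ring
  rw [this, ha, sub_neg_eq_add, one_add_one_eq_two]

theorem one_add_mul_one_add_mul_one_add_of_anticomm (hb : b * b = -1) (hab : a * b = -(b * a)) :
    (1 + b) * (1 + a) * (1 + b) = 2 * (a + b) := by
  have hbab : b * a * b = a := by
    rw [mul_assoc, hab, mul_neg, ← mul_assoc, hb, neg_one_mul, neg_neg]
  have : (1 + b) * (1 + a) * (1 + b) = 1 + b * b + (a * b + b * a) + b * a * b + (a + 2 * b) := by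
    noncomm_ring
  rw [this, hb, hab, hbab]
  noncomm_ring

theorem one_sub_mul_mul_one_add_of_anticomm (ha : a * a = -1) (hab : a * b = -(b * a)) :
    (1 - a) * b * (1 + a) = 2 * (b * a) := by
  have haba : a * b * a = b := by
    rw [hab, neg_mul, mul_assoc, ha, mul_neg_one, neg_neg]
  have : (1 - a) * b * (1 + a) = b + b * a - a * b - a * b * a := by noncomm_ring
  rw [this, haba, hab]
  noncomm_ring

end AnticommutingSquareRoots

section InvSqrtTwoSMul

variable {A : Type*} [Ring A] [Algebra ℝ A] {a b : A}

theorem inv_sqrt_two_smul_mul_inv_sqrt_two_smul (x y : A) :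
    ((Real.sqrt 2)⁻¹ • x) * ((Real.sqrt 2)⁻¹ • y) = (2 : ℝ)⁻¹ • (x * y) := by
  rw [smul_mul_smul_comm, ← mul_inv, Real.mul_self_sqrt zero_le_two]

theorem inv_two_smul_two_mul (x : A) : (2 : ℝ)⁻¹ • (2 * x) = x := by
  rw [two_mul, ← two_smul ℝ x, smul_smul, inv_mul_cancel₀ two_ne_zero, one_smul]

theorem sq_inv_sqrt_two_smul_one_add (ha : a * a = -1) :
    ((Real.sqrt 2)⁻¹ • (1 + a)) ^ 2 = a := by
  rw [sq, inv_sqrt_two_smul_mul_inv_sqrt_two_smul, one_add_mul_self_of_mul_self_eq_neg_one ha,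
    inv_two_smul_two_mul]

theorem pow_eight_inv_sqrt_two_smul_one_add (ha : a * a = -1) :
    ((Real.sqrt 2)⁻¹ • (1 + a)) ^ 8 = 1 := by
  rw [show 8 = 2 * 2 * 2 from rfl, pow_mul, pow_mul, sq_inv_sqrt_two_smul_one_add ha, sq a, ha,
    neg_one_sq]

theorem inv_sqrt_two_smul_one_sub_mul_inv_sqrt_two_smul_one_add (ha : a * a = -1) :
    ((Real.sqrt 2)⁻¹ • (1 - a)) * ((Real.sqrt 2)⁻¹ • (1 + a)) = 1 := by
  rw [inv_sqrt_two_smul_mul_inv_sqrt_two_smul, one_sub_mul_one_add_of_mul_self_eq_neg_one ha,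
    ← mul_one (2 : A), inv_two_smul_two_mul]

theorem inv_sqrt_two_smul_one_add_mul_inv_sqrt_two_smul_one_sub (ha : a * a = -1) :
    ((Real.sqrt 2)⁻¹ • (1 + a)) * ((Real.sqrt 2)⁻¹ • (1 - a)) = 1 := by
  rw [inv_sqrt_two_smul_mul_inv_sqrt_two_smul, one_add_mul_one_sub_of_mul_self_eq_neg_one ha,
    ← mul_one (2 : A), inv_two_smul_two_mul]

theorem inv_sqrt_two_smul_one_add_braid (ha : a * a = -1) (hb : b * b = -1)
    (hab : a * b = -(b * a)) :
    (Real.sqrt 2)⁻¹ • (1 + b) * (Real.sqrt 2)⁻¹ • (1 + a) * (Real.sqrt 2)⁻¹ • (1 + b) =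
      (Real.sqrt 2)⁻¹ • (1 + a) * (Real.sqrt 2)⁻¹ • (1 + b) * (Real.sqrt 2)⁻¹ • (1 + a) := by
  simp only [smul_mul_smul_comm]
  rw [one_add_mul_one_add_mul_one_add_of_anticomm hb hab,
    one_add_mul_one_add_mul_one_add_of_anticomm ha (neg_eq_iff_eq_neg.mp hab.symm), add_comm]

theorem inv_sqrt_two_smul_one_sub_mul_mul_inv_sqrt_two_smul_one_add (ha : a * a = -1)
    (hab : a * b = -(b * a)) :
    (Real.sqrt 2)⁻¹ • (1 - a) * b * (Real.sqrt 2)⁻¹ • (1 + a) = b * a := by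
  rw [smul_mul_assoc, inv_sqrt_two_smul_mul_inv_sqrt_two_smul,
    one_sub_mul_mul_one_add_of_anticomm ha hab, inv_two_smul_two_mul]

end InvSqrtTwoSMul

theorem Qneg3_apply (v : Fin 3 → ℝ) : Qneg3 v = -∑ k, v k * v k := by
  simp [Qneg3, QuadraticMap.weightedSumSquares_apply]

theorem Qneg3_single (i : Fin 3) : Qneg3 (Pi.single i 1) = -1 := by
  simp [Qneg3_apply, Pi.single_apply]

theorem e_mul_self (i : Fin 3) : e i * e i = -1 := by
  rw [e, ι_sq_scalar, Qneg3_single, map_neg, map_one]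

theorem e_mul_comm_of_ne {i j : Fin 3} (h : i ≠ j) : e i * e j = -(e j * e i) :=
  ι_mul_ι_comm_of_isOrtho <| by
    simp [QuadraticMap.IsOrtho, Qneg3_apply, Pi.single_apply, mul_add, Finset.sum_add_distrib,
      h, h.symm]

theorem e_mul_e_mul_self_of_ne {i j : Fin 3} (h : i ≠ j) : e i * e j * (e i * e j) = -1 :=
  calc e i * e j * (e i * e j) = e i * (e j * e i) * e j := by noncomm_ring
    _ = -(e i * e i * (e j * e j)) := by rw [e_mul_comm_of_ne h.symm]; noncomm_ring
    _ = -1 := by rw [e_mul_self, e_mul_self]; noncomm_ring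

theorem e_mul_e_mul_e_mul_e_of_ne {i j k : Fin 3} (hij : i ≠ j) (hjk : j ≠ k) (hik : i ≠ k) :
    e j * e k * (e i * e j) = -(e i * e j * (e j * e k)) :=
  calc e j * e k * (e i * e j) = e j * (e k * e i) * e j := by noncomm_ring
    _ = -(e j * e i * (e k * e j)) := by rw [e_mul_comm_of_ne hik.symm]; noncomm_ring
    _ = -(e i * e j * (e j * e k)) := by
      rw [e_mul_comm_of_ne hij.symm, e_mul_comm_of_ne hjk.symm]; noncomm_ring

theorem inv_sqrt_two_smul_one_add_e_mul_e_mem_spinGroup {i j : Fin 3} (h : i ≠ j) :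
    (Real.sqrt 2)⁻¹ • (1 + e i * e j) ∈ spinGroup Qneg3 := by
  have hv : Qneg3 ((Real.sqrt 2)⁻¹ • (Pi.single j 1 - Pi.single i 1)) = -1 := by
    rw [QuadraticMap.map_smul, Qneg3_apply, ← mul_inv, Real.mul_self_sqrt zero_le_two]
    norm_num [Pi.single_apply, mul_sub, h, h.symm]
  have hprod : ι Qneg3 (Pi.single i 1) * ι Qneg3 ((Real.sqrt 2)⁻¹ • (Pi.single j 1 - Pi.single i 1))
      = (Real.sqrt 2)⁻¹ • (1 + e i * e j) := by
    rw [map_smul, map_sub, mul_smul_comm, mul_sub, ← e, ← e, e_mul_self, sub_neg_eq_add, add_comm]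
  rw [← hprod]
  exact ι_mul_ι_mem_spinGroup (by rw [Qneg3_single, hv, neg_mul_neg, one_mul])

/-- In `Spin(3) ⊂ Cl(3)⁰`, the elements `xᵢ = (1/√2)(1+e₂e₃)` and `xⱼ = (1/√2)(1+e₁e₂)`
satisfy the braid relation `xⱼxᵢxⱼ = xᵢxⱼxᵢ`, have order dividing 8, and satisfy
`xᵢ⁻¹ xⱼ² xᵢ = xⱼ² xᵢ²` (where `xᵢ⁻¹ = (1/√2)(1 − e₂e₃)`). -/
theorem stmt16 :
    xi ∈ spinGroup Qneg3 ∧ xj ∈ spinGroup Qneg3 ∧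
    xj * xi * xj = xi * xj * xi ∧
    xi ^ 8 = 1 ∧ xj ^ 8 = 1 ∧
    ((Real.sqrt 2)⁻¹ • (1 - e 1 * e 2)) * xi = 1 ∧
    xi * ((Real.sqrt 2)⁻¹ • (1 - e 1 * e 2)) = 1 ∧
    ((Real.sqrt 2)⁻¹ • (1 - e 1 * e 2)) * xj ^ 2 * xi = xj ^ 2 * xi ^ 2 := by
  have ha : e 1 * e 2 * (e 1 * e 2) = -1 := e_mul_e_mul_self_of_ne (by decide)
  have hb : e 0 * e 1 * (e 0 * e 1) = -1 := e_mul_e_mul_self_of_ne (by decide)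
  have hab : e 1 * e 2 * (e 0 * e 1) = -(e 0 * e 1 * (e 1 * e 2)) :=
    e_mul_e_mul_e_mul_e_of_ne (by decide) (by decide) (by decide)
  refine ⟨inv_sqrt_two_smul_one_add_e_mul_e_mem_spinGroup (by decide),
    inv_sqrt_two_smul_one_add_e_mul_e_mem_spinGroup (by decide),
    inv_sqrt_two_smul_one_add_braid ha hb hab, pow_eight_inv_sqrt_two_smul_one_add ha,
    pow_eight_inv_sqrt_two_smul_one_add hb,
    inv_sqrt_two_smul_one_sub_mul_inv_sqrt_two_smul_one_add ha,
    inv_sqrt_two_smul_one_add_mul_inv_sqrt_two_smul_one_sub ha, ?_⟩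
  rw [xj, xi, sq_inv_sqrt_two_smul_one_add hb, sq_inv_sqrt_two_smul_one_add ha]
  exact inv_sqrt_two_smul_one_sub_mul_mul_inv_sqrt_two_smul_one_add ha hab
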